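/- Suppose range(A) ⊆ range(B) and range(A*) ⊆ range(B*), and suppose some bounded inner inverse of B is also an inner inverse of A (i.e., there is B⁻ ∈ L(K,H) with B B⁻ B = B and A B⁻ A = A). Then every bounded inner inverse of B is an inner inverse of A. -/

import Mathlib

/-! Since `ker B = (range B*)ᗮ ⊆ (range A*)ᗮ = ker A` and `range A ⊆ range B`, the operator
`A C A` depends only on `B C B`. All inner inverses `C` of `B` share `B C B = B`, so they share
`A C A`, which equals `A` for the one inner inverse assumed to be shared. -/

open ContinuousLinearMap

theorem LinearMap.comp_comp_eq_of_range_le_of_ker_le {R M N : Type*} [Ring R]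
    [AddCommGroup M] [Module R M] [AddCommGroup N] [Module R N] {A B : M →ₗ[R] N}
    (hrange : range A ≤ range B) (hker : ker B ≤ ker A) {C C' : N →ₗ[R] M}
    (hC : B ∘ₗ C ∘ₗ B = B ∘ₗ C' ∘ₗ B) : A ∘ₗ C ∘ₗ A = A ∘ₗ C' ∘ₗ A := by
  ext x
  obtain ⟨u, hu⟩ := hrange ⟨x, rfl⟩
  have hBu : C (B u) - C' (B u) ∈ ker A :=
    hker <| by simpa [sub_eq_zero] using LinearMap.congr_fun hC u
  simpa [← hu, sub_eq_zero] using hBu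

theorem ContinuousLinearMap.ker_le_ker_of_range_adjoint_le {𝕜 E F : Type*} [RCLike 𝕜]
    [NormedAddCommGroup E] [InnerProductSpace 𝕜 E] [CompleteSpace E]
    [NormedAddCommGroup F] [InnerProductSpace 𝕜 F] [CompleteSpace F] {A B : E →L[𝕜] F}
    (h : (adjoint A).range ≤ (adjoint B).range) : B.ker ≤ A.ker := by
  simpa [orthogonal_range] using Submodule.orthogonal_le h

theorem stmt8 {H K : Type*} [NormedAddCommGroup H] [InnerProductSpace ℂ H] [CompleteSpace H]
    [NormedAddCommGroup K] [InnerProductSpace ℂ K] [CompleteSpace K]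
    (A B : H →L[ℂ] K)
    (h1 : LinearMap.range (A : H →ₗ[ℂ] K) ≤ LinearMap.range (B : H →ₗ[ℂ] K))
    (h2 : LinearMap.range (adjoint A : K →ₗ[ℂ] H) ≤ LinearMap.range (adjoint B : K →ₗ[ℂ] H))
    (h3 : ∃ Bm : K →L[ℂ] H, B ∘L (Bm ∘L B) = B ∧ A ∘L (Bm ∘L A) = A) :
    ∀ Bm' : K →L[ℂ] H, B ∘L (Bm' ∘L B) = B → A ∘L (Bm' ∘L A) = A := by
  intro Bm' hBm'
  obtain ⟨Bm, hBm, hABm⟩ := h3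
  have hC : ((B ∘L Bm' ∘L B : H →L[ℂ] K) : H →ₗ[ℂ] K) = (B ∘L Bm ∘L B : H →L[ℂ] K) :=
    congrArg _ (hBm'.trans hBm.symm)
  calc A ∘L (Bm' ∘L A) = A ∘L (Bm ∘L A) := coe_injective <|
        LinearMap.comp_comp_eq_of_range_le_of_ker_le h1 (ker_le_ker_of_range_adjoint_le h2) hC
    _ = A := hABm
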